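/- arXiv:2106.08748 — 7 statements merged into one kernel-verified Lean document; each statement's English description precedes it below -/
import Mathlib

section
/- Let n ≥ 1, let g : EuclideanSpace ℝ (Fin n) → ℝ be differentiable, and let x⋆ be a point. If for every x ≠ x⋆ one has ⟪∇g(x), (x − x⋆)/‖x − x⋆‖⟫ > 0, then g is invex, i.e., every point x with ∇g(x) = 0 satisfies g(x) ≤ g(y) for all y. (Proposition 2) -/
/-!
Along the ray `t ↦ x⋆ + t • (y - x⋆)` the derivative of `g` is a positive multiple of the radial
derivative, so `g` increases strictly from `x⋆` to any other point `y`. In particular `x⋆` is a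
strict global minimizer, and it is the only stationary point since the radial derivative is
positive everywhere else.
-/

open RealInnerProductSpace

variable {E : Type*} [NormedAddCommGroup E] [NormedSpace ℝ E]

theorem lt_of_forall_fderiv_apply_sub_pos {g : E → ℝ} {x₀ y : E} (hg : Differentiable ℝ g)
    (hrad : ∀ x ≠ x₀, 0 < fderiv ℝ g x (x - x₀)) (hy : y ≠ x₀) : g x₀ < g y := by
  set v := y - x₀ with hv
  let φ : ℝ → ℝ := fun t => g (x₀ + t • v)
  have hline : ∀ t : ℝ, HasDerivAt (fun t : ℝ => x₀ + t • v) v t := fun t => by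
    simpa using ((hasDerivAt_id t).smul_const v).const_add x₀
  have hφ : ∀ t, HasDerivAt φ (fderiv ℝ g (x₀ + t • v) v) t := fun t =>
    (hg _).hasFDerivAt.comp_hasDerivAt t (hline t)
  have hφ_deriv_pos : ∀ t ∈ interior (Set.Icc (0 : ℝ) 1), 0 < deriv φ t := by
    rw [interior_Icc]
    rintro t ⟨ht, -⟩
    have hpos := hrad (x₀ + t • v) (by simpa [ht.ne'] using sub_ne_zero.mpr hy)
    rw [add_sub_cancel_left, map_smul, smul_eq_mul] at hpos
    rw [(hφ t).deriv]
    exact pos_of_mul_pos_right hpos ht.le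
  have hφ_cont : ContinuousOn φ (Set.Icc 0 1) := fun t _ => (hφ t).continuousAt.continuousWithinAt
  have hmono : StrictMonoOn φ (Set.Icc 0 1) :=
    strictMonoOn_of_deriv_pos (convex_Icc 0 1) hφ_cont hφ_deriv_pos
  simpa [φ, hv] using hmono (Set.left_mem_Icc.2 zero_le_one) (Set.right_mem_Icc.2 zero_le_one)
    zero_lt_one

theorem proposition_2_general (n : ℕ)
    (g : EuclideanSpace ℝ (Fin n) → ℝ)
    (hg : Differentiable ℝ g)
    (xstar : EuclideanSpace ℝ (Fin n))
    (hineq : ∀ x, x ≠ xstar →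
      ⟪gradient g x, (‖x - xstar‖)⁻¹ • (x - xstar)⟫ > 0) :
    ∀ x, gradient g x = 0 → ∀ y, g x ≤ g y := by
  have hrad : ∀ x ≠ xstar, 0 < fderiv ℝ g x (x - xstar) := fun x hx => by
    have hpos := hineq x hx
    rw [real_inner_smul_right, inner_gradient_left] at hpos
    exact pos_of_mul_pos_right hpos (inv_nonneg.2 (norm_nonneg _))
  intro x hx y
  obtain rfl : x = xstar := by
    by_contra hne
    simpa [hx] using hineq x hne
  rcases eq_or_ne y x with rfl | hy
  · rfl
  · exact (lt_of_forall_fderiv_apply_sub_pos hg hrad hy).le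

/-- Proposition 2: if `⟪∇g x, (x − x⋆)/‖x − x⋆‖⟫ > 0` for every `x ≠ x⋆`,
then `g` is invex: every stationary point is a global minimizer. -/
theorem proposition_2 (n : ℕ) (hn : 1 ≤ n)
    (g : EuclideanSpace ℝ (Fin n) → ℝ)
    (hg : Differentiable ℝ g)
    (xstar : EuclideanSpace ℝ (Fin n))
    (hineq : ∀ x, x ≠ xstar →
      ⟪gradient g x, (‖x - xstar‖)⁻¹ • (x - xstar)⟫ > 0) :
    ∀ x, gradient g x = 0 → ∀ y, g x ≤ g y :=
  proposition_2_general n g hg xstar hineq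
end

section
/- Let n ≥ m ≥ 1, let f : EuclideanSpace ℝ (Fin n) → EuclideanSpace ℝ (Fin m) be differentiable with derivative (Fréchet differential) of rank m (i.e., surjective as a linear map) at every point, and let g : EuclideanSpace ℝ (Fin m) → ℝ be invex. Then the composition h = g ∘ f is invex, i.e., every point x at which the Fréchet derivative of h vanishes satisfies h(x) ≤ h(y) for all y. (Property 1 of invex functions) -/
open Function

theorem fderiv_eq_zero_of_fderiv_comp_eq_zero {𝕜 E F G : Type*} [NontriviallyNormedField 𝕜]
    [NormedAddCommGroup E] [NormedSpace 𝕜 E] [NormedAddCommGroup F] [NormedSpace 𝕜 F]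
    [NormedAddCommGroup G] [NormedSpace 𝕜 G] {f : E → F} {g : F → G} {x : E}
    (hf : DifferentiableAt 𝕜 f x) (hsurj : Surjective (fderiv 𝕜 f x))
    (h : fderiv 𝕜 (g ∘ f) x = 0) : fderiv 𝕜 g (f x) = 0 := by
  by_cases hg : DifferentiableAt 𝕜 g (f x)
  · ext v
    obtain ⟨u, rfl⟩ := hsurj v
    simpa [fderiv_comp x hg hf] using congr($h u)
  · exact fderiv_zero_of_not_differentiableAt hg

theorem property_1_general (n m : ℕ)
    (f : EuclideanSpace ℝ (Fin n) → EuclideanSpace ℝ (Fin m))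
    (hf : Differentiable ℝ f)
    (hrank : ∀ x, Function.Surjective (fderiv ℝ f x))
    (g : EuclideanSpace ℝ (Fin m) → ℝ)
    (hg_invex : ∀ x, gradient g x = 0 → ∀ y, g x ≤ g y) :
    ∀ x, fderiv ℝ (g ∘ f) x = 0 → ∀ y, (g ∘ f) x ≤ (g ∘ f) y := by
  intro x hx y
  have hgrad : gradient g (f x) = 0 := by
    rw [gradient, fderiv_eq_zero_of_fderiv_comp_eq_zero (hf x) (hrank x) hx, map_zero]
  exact hg_invex (f x) hgrad (f y)

/-- Property 1 of invex functions: if `f : ℝⁿ → ℝᵐ` (`n ≥ m`) is differentiable with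
Fréchet derivative of rank `m` (surjective) at every point, and `g : ℝᵐ → ℝ` is invex,
then `h = g ∘ f` is invex. -/
theorem property_1 (n m : ℕ) (hm : 1 ≤ m) (hnm : m ≤ n)
    (f : EuclideanSpace ℝ (Fin n) → EuclideanSpace ℝ (Fin m))
    (hf : Differentiable ℝ f)
    (hrank : ∀ x, Function.Surjective (fderiv ℝ f x))
    (g : EuclideanSpace ℝ (Fin m) → ℝ)
    (hg : Differentiable ℝ g)
    (hg_invex : ∀ x, gradient g x = 0 → ∀ y, g x ≤ g y) :
    ∀ x, fderiv ℝ (g ∘ f) x = 0 → ∀ y, (g ∘ f) x ≤ (g ∘ f) y :=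
  property_1_general n m f hf hrank g hg_invex
end

section
/- Let n ≥ 1 and let f : EuclideanSpace ℝ (Fin n) → ℝ be differentiable. Then the following are equivalent: (i) there exists a function η : EuclideanSpace ℝ (Fin n) → EuclideanSpace ℝ (Fin n) → EuclideanSpace ℝ (Fin n) such that for all x₁, x₂, f(x₁) − f(x₂) ≥ ⟪η x₁ x₂, ∇f(x₂)⟫; (ii) every stationary point of f is a global minimizer, i.e., for every x₂ with ∇f(x₂) = 0 and every x₁, f(x₂) ≤ f(x₁). (Characterization of invexity used throughout the paper) -/
/-!
At a stationary point `x₂` the invexity inequality reads `f x₁ - f x₂ ≥ 0`, whatever `η` is.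
Away from stationary points, `η x₁ x₂ = ((f x₁ - f x₂) / ‖∇f x₂‖²) • ∇f x₂` turns it into an
equality, so this `η` works as soon as every stationary point is a global minimizer.
-/

open RealInnerProductSpace

variable {E : Type*} [NormedAddCommGroup E] [InnerProductSpace ℝ E]

lemma inner_div_normSq_smul_self {v : E} (hv : v ≠ 0) (c : ℝ) :
    ⟪(c / ‖v‖ ^ 2) • v, v⟫ = c := by
  have hv' : ‖v‖ ^ 2 ≠ 0 := pow_ne_zero _ (norm_ne_zero_iff.mpr hv)
  rw [real_inner_smul_left, real_inner_self_eq_norm_sq, div_mul_cancel₀ c hv']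

noncomputable def invexityFunction (f : E → ℝ) (g : E → E) (x₁ x₂ : E) : E :=
  ((f x₁ - f x₂) / ‖g x₂‖ ^ 2) • g x₂

lemma inner_invexityFunction_le {f : E → ℝ} {g : E → E}
    (hmin : ∀ x₂, g x₂ = 0 → ∀ x₁, f x₂ ≤ f x₁) (x₁ x₂ : E) :
    ⟪invexityFunction f g x₁ x₂, g x₂⟫ ≤ f x₁ - f x₂ := by
  by_cases hg : g x₂ = 0
  · rw [hg, inner_zero_right]
    linarith [hmin x₂ hg x₁]
  · exact (inner_div_normSq_smul_self hg _).le

theorem exists_invexity_iff_stationary_le (f : E → ℝ) (g : E → E) :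
    (∃ η : E → E → E, ∀ x₁ x₂, f x₁ - f x₂ ≥ ⟪η x₁ x₂, g x₂⟫) ↔
      ∀ x₂, g x₂ = 0 → ∀ x₁, f x₂ ≤ f x₁ := by
  refine ⟨?_, fun hmin => ⟨invexityFunction f g, inner_invexityFunction_le hmin⟩⟩
  rintro ⟨η, hη⟩ x₂ hg x₁
  have h := hη x₁ x₂
  rw [hg, inner_zero_right] at h
  linarith

theorem invex_characterization_general (n : ℕ)
    (f : EuclideanSpace ℝ (Fin n) → ℝ) :
    (∃ η : EuclideanSpace ℝ (Fin n) → EuclideanSpace ℝ (Fin n) → EuclideanSpace ℝ (Fin n),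
        ∀ x₁ x₂, f x₁ - f x₂ ≥ ⟪η x₁ x₂, gradient f x₂⟫) ↔
    (∀ x₂, gradient f x₂ = 0 → ∀ x₁, f x₂ ≤ f x₁) :=
  exists_invexity_iff_stationary_le f (gradient f)

/-- Characterization of invexity: a differentiable function admits an invexity
function `η` (classical definition) if and only if every stationary point is a
global minimizer. -/
theorem invex_characterization (n : ℕ) (hn : 1 ≤ n)
    (f : EuclideanSpace ℝ (Fin n) → ℝ)
    (hf : Differentiable ℝ f) :
    (∃ η : EuclideanSpace ℝ (Fin n) → EuclideanSpace ℝ (Fin n) → EuclideanSpace ℝ (Fin n),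
        ∀ x₁ x₂, f x₁ - f x₂ ≥ ⟪η x₁ x₂, gradient f x₂⟫) ↔
    (∀ x₂, gradient f x₂ = 0 → ∀ x₁, f x₂ ≤ f x₁) :=
  invex_characterization_general n f
end

section
/- Let n ≥ 1 and let f : EuclideanSpace ℝ (Fin n) → ℝ be differentiable. Suppose f is strongly quasi-convex: there exists γ > 0 such that for all x, y and all t ∈ [0,1], f(t • x + (1 − t) • y) ≤ max (f x) (f y) − γ * t * (1 − t) * ‖x − y‖². Then f is invex, i.e., every point x with ∇f(x) = 0 satisfies f(x) ≤ f(y) for all y. (The paper's claim that all strongly quasi-convex functions are invex) -/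
/-!
Along the segment from a stationary point `x` towards a point `y` with `f y < f x`, strong
quasi-convexity forces `f` to drop below `f x` at a rate of order `t`, which is incompatible with
the vanishing of the derivative at `x`.
-/

open Set AffineMap

def StronglyQuasiconvex {E : Type*} [NormedAddCommGroup E] [NormedSpace ℝ E]
    (γ : ℝ) (f : E → ℝ) : Prop :=
  ∀ x y : E, ∀ t ∈ Icc (0 : ℝ) 1,
    f (t • x + (1 - t) • y) ≤ max (f x) (f y) - γ * t * (1 - t) * ‖x - y‖ ^ 2

theorem IsLocalMaxOn.hasDerivWithinAt_Icc_nonpos {h : ℝ → ℝ} {a b h' : ℝ} (hab : a < b)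
    (hmax : IsLocalMaxOn h (Icc a b) a) (hd : HasDerivWithinAt h h' (Icc a b) a) : h' ≤ 0 := by
  have hcone : b - a ∈ posTangentConeAt (Icc a b) a :=
    sub_mem_posTangentConeAt_of_segment_subset (segment_eq_Icc hab.le).subset
  have := hmax.hasFDerivWithinAt_nonpos hd.hasFDerivWithinAt hcone
  simp only [ContinuousLinearMap.toSpanSingleton_apply, smul_eq_mul] at this
  exact nonpos_of_mul_nonpos_right this (sub_pos.2 hab)

namespace StronglyQuasiconvex

variable {E : Type*} [NormedAddCommGroup E] [NormedSpace ℝ E] {γ : ℝ} {f : E → ℝ}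

theorem le_of_hasFDerivAt_eq_zero (hf : StronglyQuasiconvex γ f) (hγ : 0 < γ) {x : E}
    (hx : HasFDerivAt f (0 : E →L[ℝ] ℝ) x) (y : E) : f x ≤ f y := by
  by_contra! hlt
  set c := γ * ‖y - x‖ ^ 2
  have hc : 0 < c := by
    have := norm_pos_iff.2 (sub_ne_zero.2 (ne_of_apply_ne f hlt.ne))
    positivity
  -- Adding `c t (1 - t)` to `f` along the segment keeps it below `f x` but gives it slope `c`.
  have hmax : IsMaxOn (fun t => f (lineMap x y t) + c * (t * (1 - t))) (Icc 0 1) 0 := by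
    intro t ht
    have := hf y x t ht
    rw [max_eq_right hlt.le] at this
    dsimp only
    rw [mem_ofPred_eq, lineMap_apply_zero, lineMap_apply_module, add_comm ((1 - t) • x)]
    linarith
  have hderiv : HasDerivAt (fun t => f (lineMap x y t) + c * (t * (1 - t))) c 0 := by
    have hline : HasDerivAt (fun t : ℝ => f (lineMap x y t)) 0 0 :=
      (hx.comp_hasDerivAt_of_eq (0 : ℝ) hasDerivAt_lineMap
        (lineMap_apply_zero x y).symm).congr_deriv (by simp)
    have hquad : HasDerivAt (fun t : ℝ => t * (1 - t)) 1 0 := by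
      have := (hasDerivAt_id' (0 : ℝ)).mul ((hasDerivAt_id' (0 : ℝ)).const_sub 1)
      norm_num at this
      exact this
    exact (hline.add (hquad.const_mul c)).congr_deriv (by ring)
  have := hmax.localize.hasDerivWithinAt_Icc_nonpos zero_lt_one hderiv.hasDerivWithinAt
  linarith

end StronglyQuasiconvex

theorem strongly_quasiconvex_invex_general (n : ℕ)
    (f : EuclideanSpace ℝ (Fin n) → ℝ)
    (hf : Differentiable ℝ f)
    (hsqc : ∃ γ : ℝ, 0 < γ ∧ ∀ x y : EuclideanSpace ℝ (Fin n), ∀ t : ℝ,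
      t ∈ Set.Icc (0 : ℝ) 1 →
      f (t • x + (1 - t) • y) ≤ max (f x) (f y) - γ * t * (1 - t) * ‖x - y‖ ^ 2) :
    ∀ x, gradient f x = 0 → ∀ y, f x ≤ f y := by
  obtain ⟨γ, hγ, hq⟩ := hsqc
  intro x hx
  have hfd : HasFDerivAt f (0 : EuclideanSpace ℝ (Fin n) →L[ℝ] ℝ) x := by
    simpa [hx] using hasGradientAt_iff_hasFDerivAt.1 (hf x).hasGradientAt
  exact StronglyQuasiconvex.le_of_hasFDerivAt_eq_zero hq hγ hfd

/-- Every strongly quasi-convex differentiable function is invex. -/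
theorem strongly_quasiconvex_invex (n : ℕ) (hn : 1 ≤ n)
    (f : EuclideanSpace ℝ (Fin n) → ℝ)
    (hf : Differentiable ℝ f)
    (hsqc : ∃ γ : ℝ, 0 < γ ∧ ∀ x y : EuclideanSpace ℝ (Fin n), ∀ t : ℝ,
      t ∈ Set.Icc (0 : ℝ) 1 →
      f (t • x + (1 - t) • y) ≤ max (f x) (f y) - γ * t * (1 - t) * ‖x - y‖ ^ 2) :
    ∀ x, gradient f x = 0 → ∀ y, f x ≤ f y :=
  strongly_quasiconvex_invex_general n f hf hsqc
end

section
/- Let f : ℝ → ℝ be differentiable and invex (every x with f'(x) = 0 satisfies f(x) ≤ f(y) for all y). Then for every threshold c ∈ ℝ, the lower contour set {x : ℝ | f(x) ≤ c} is order-connected, i.e., it is an interval: whenever a and b lie in the set and a ≤ m ≤ b, then m lies in the set. (One-dimensional case of the paper's claim that the set (−∞, θ] of an invex function is a connected (invex) set, Table 1) -/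
/-!
If `f m > c ≥ f a, f b` with `a ≤ m ≤ b`, a maximum of `f` on `[a, b]` is attained at an interior
point, so it is a local maximum and hence stationary. Invexity makes it a global minimum, which
is absurd since its value exceeds `f a`.
-/

open Set

section

variable {α β : Type*} [ConditionallyCompleteLinearOrder α] [TopologicalSpace α] [OrderTopology α]
  [LinearOrder β] [TopologicalSpace β] [OrderClosedTopology β] {f : α → β}

theorem ContinuousOn.exists_isLocalMax_mem_Ioo_of_lt {a b m : α} (hf : ContinuousOn f (Icc a b))
    (hm : m ∈ Icc a b) (ha : f a < f m) (hb : f b < f m) :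
    ∃ x ∈ Ioo a b, IsLocalMax f x ∧ f m ≤ f x := by
  obtain ⟨x, hx, hmax⟩ := isCompact_Icc.exists_isMaxOn ⟨m, hm⟩ hf
  have hmx : f m ≤ f x := hmax hm
  have hxa : a < x := hx.1.lt_of_ne fun h => (ha.trans_le hmx).ne (by rw [h])
  have hxb : x < b := hx.2.lt_of_ne fun h => (hb.trans_le hmx).ne (by rw [h])
  exact ⟨x, ⟨hxa, hxb⟩, hmax.isLocalMax (Icc_mem_nhds hxa hxb), hmx⟩

theorem Continuous.ordConnected_setOf_le_of_isLocalMax_le (hf : Continuous f)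
    (hmax : ∀ x, IsLocalMax f x → ∀ y, f x ≤ f y) (c : β) : {x | f x ≤ c}.OrdConnected := by
  refine ⟨fun a ha b hb m hm => ?_⟩
  by_contra hm'
  have hc : c < f m := not_le.mp hm'
  obtain ⟨x, -, hx, hmx⟩ :=
    hf.continuousOn.exists_isLocalMax_mem_Ioo_of_lt hm (ha.trans_lt hc) (hb.trans_lt hc)
  exact (hc.trans_le hmx).not_ge ((hmax x hx a).trans ha)

end

/-- One-dimensional case: the lower contour set `{x | f x ≤ c}` of a
differentiable invex function `f : ℝ → ℝ` is order-connected (an interval). -/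
theorem invex_lower_contour_ordConnected
    (f : ℝ → ℝ) (hf : Differentiable ℝ f)
    (hinvex : ∀ x, deriv f x = 0 → ∀ y, f x ≤ f y) :
    ∀ c : ℝ, ∀ a b m : ℝ, f a ≤ c → f b ≤ c → a ≤ m → m ≤ b → f m ≤ c := by
  intro c a b m ha hb ham hmb
  have hsub : {x | f x ≤ c}.OrdConnected :=
    hf.continuous.ordConnected_setOf_le_of_isLocalMax_le
      (fun x hx => hinvex x hx.deriv_eq_zero) c
  exact hsub.out ha hb ⟨ham, hmb⟩
end

section
/- Let f, h : ℝ → ℝ be differentiable, let x⋆ ∈ ℝ be a global minimizer of f, suppose f'(x) ≠ 0 for all x ≠ x⋆, and suppose h'(x) · f'(x) > 0 for all x ≠ x⋆. Then h is invex and x⋆ is a global minimizer of h: for every x with h'(x) = 0 and every y, h(x) ≤ h(y), and h(x⋆) ≤ h(y) for all y. (One-dimensional version of Proposition 1, proved in the appendix: a modification whose derivative never opposes the derivative of an invex function preserves invexity) -/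
/-!
By Darboux's theorem `f'` has constant sign on each side of `x⋆`, and minimality of `x⋆` forces
`f' < 0` on the left and `f' > 0` on the right. The hypothesis `h' f' > 0` transfers these signs
to `h'`, so `h` decreases up to `x⋆` and increases after it. Finally `x⋆` is the only possible
stationary point of `h`.
-/

open Set

variable {f : ℝ → ℝ} {a : ℝ}

lemma deriv_pos_of_isMinOn_Ici (hf : ContinuousOn f (Ici a)) (hmin : IsMinOn f (Ici a) a)
    (hne : ∀ x ∈ Ioi a, deriv f x ≠ 0) : ∀ x ∈ Ioi a, 0 < deriv f x := by
  have hderiv : ∀ x ∈ Ioi a, HasDerivWithinAt f (deriv f x) (Ioi a) x := fun x hx =>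
    (differentiableAt_of_deriv_ne_zero (hne x hx)).hasDerivAt.hasDerivWithinAt
  refine (hasDerivWithinAt_forall_lt_or_forall_gt_of_forall_ne (convex_Ioi a) hderiv hne).resolve_left
    fun hneg => ?_
  have hanti : StrictAntiOn f (Ici a) :=
    strictAntiOn_of_deriv_neg (convex_Ici a) hf (by rwa [interior_Ici])
  exact (hanti self_mem_Ici (by simp : a ≤ a + 1) (by linarith)).not_ge
    (hmin (by simp : a ≤ a + 1))

lemma deriv_neg_of_isMinOn_Iic (hf : ContinuousOn f (Iic a)) (hmin : IsMinOn f (Iic a) a)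
    (hne : ∀ x ∈ Iio a, deriv f x ≠ 0) : ∀ x ∈ Iio a, deriv f x < 0 := by
  have hderiv : ∀ x ∈ Iio a, HasDerivWithinAt f (deriv f x) (Iio a) x := fun x hx =>
    (differentiableAt_of_deriv_ne_zero (hne x hx)).hasDerivAt.hasDerivWithinAt
  refine (hasDerivWithinAt_forall_lt_or_forall_gt_of_forall_ne (convex_Iio a) hderiv hne).resolve_right
    fun hpos => ?_
  have hmono : StrictMonoOn f (Iic a) :=
    strictMonoOn_of_deriv_pos (convex_Iic a) hf (by rwa [interior_Iic])
  exact (hmono (by simp : a - 1 ≤ a) self_mem_Iic (by linarith)).not_ge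
    (hmin (by simp : a - 1 ≤ a))

lemma isMinOn_univ_of_deriv_neg_of_deriv_pos (hf : Continuous f)
    (hneg : ∀ x ∈ Iio a, deriv f x < 0) (hpos : ∀ x ∈ Ioi a, 0 < deriv f x) :
    IsMinOn f univ a := by
  have hanti : StrictAntiOn f (Iic a) :=
    strictAntiOn_of_deriv_neg (convex_Iic a) hf.continuousOn (by rwa [interior_Iic])
  have hmono : StrictMonoOn f (Ici a) :=
    strictMonoOn_of_deriv_pos (convex_Ici a) hf.continuousOn (by rwa [interior_Ici])
  refine isMinOn_univ_iff.2 fun y => ?_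
  rcases lt_trichotomy y a with hy | rfl | hy
  · exact (hanti hy.le self_mem_Iic hy).le
  · exact le_rfl
  · exact (hmono self_mem_Ici hy.le hy).le

theorem proposition_1_one_dim_general
    (f h : ℝ → ℝ) (hf : Differentiable ℝ f) (hh : Differentiable ℝ h)
    (xstar : ℝ)
    (hmin : ∀ y, f xstar ≤ f y)
    (hsame : ∀ x, x ≠ xstar → deriv h x * deriv f x > 0) :
    (∀ x, deriv h x = 0 → ∀ y, h x ≤ h y) ∧ (∀ y, h xstar ≤ h y) := by
  have hminf : IsMinOn f univ xstar := isMinOn_univ_iff.2 hmin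
  have hf' : ∀ x, x ≠ xstar → deriv f x ≠ 0 := fun x hx =>
    right_ne_zero_of_mul (hsame x hx).ne'
  have hf_right := deriv_pos_of_isMinOn_Ici hf.continuous.continuousOn
    (hminf.on_subset (subset_univ _)) fun x hx => hf' x hx.ne'
  have hf_left := deriv_neg_of_isMinOn_Iic hf.continuous.continuousOn
    (hminf.on_subset (subset_univ _)) fun x hx => hf' x hx.ne
  have hminh : ∀ y, h xstar ≤ h y := isMinOn_univ_iff.1 <|
    isMinOn_univ_of_deriv_neg_of_deriv_pos hh.continuous
      (fun x hx => neg_of_mul_pos_left (hsame x hx.ne) (hf_left x hx).le)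
      (fun x hx => pos_of_mul_pos_left (hsame x hx.ne') (hf_right x hx).le)
  refine ⟨fun x hx => ?_, hminh⟩
  obtain rfl : x = xstar := by
    by_contra hne
    simpa [hx] using hsame x hne
  exact hminh

/-- One-dimensional version of Proposition 1: if `x⋆` is a global minimizer of
`f`, `f' x ≠ 0` away from `x⋆`, and `h' x * f' x > 0` away from `x⋆`, then `h`
is invex and `x⋆` is a global minimizer of `h`. -/
theorem proposition_1_one_dim
    (f h : ℝ → ℝ) (hf : Differentiable ℝ f) (hh : Differentiable ℝ h)
    (xstar : ℝ)
    (hmin : ∀ y, f xstar ≤ f y)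
    (hf' : ∀ x, x ≠ xstar → deriv f x ≠ 0)
    (hsame : ∀ x, x ≠ xstar → deriv h x * deriv f x > 0) :
    (∀ x, deriv h x = 0 → ∀ y, h x ≤ h y) ∧ (∀ y, h xstar ≤ h y) :=
  proposition_1_one_dim_general f h hf hh xstar hmin hsame
end

section
/- Let n ≥ 1, let f : EuclideanSpace ℝ (Fin n) → EuclideanSpace ℝ (Fin n) be a bijection that is differentiable with invertible Fréchet derivative at every point, and let c ∈ EuclideanSpace ℝ (Fin n). Define h(x) = ‖f x − c‖². Then a point x is a stationary point of h (∇h(x) = 0) if and only if f(x) = c, and the unique point x₀ with f(x₀) = c is the unique global minimizer of h. In particular h is invex. (The paper's construction of an invex function as invertible network composed with a convex cone, whose centroid f⁻¹(c) is the unique minimum) -/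
/-!
The derivative of `x ↦ ‖f x - c‖²` is `v ↦ 2 ⟪f x - c, Df(x) v⟫`. When `Df(x)` is onto, testing
against a `v` with `Df(x) v = f x - c` shows that it vanishes only where `f x = c`, and such a point
is a zero of the nonnegative function `h`, hence a global minimizer; injectivity of `f` makes it
the unique one.
-/

open InnerProductSpace Function

theorem gradient_eq_zero_iff_fderiv_eq_zero {E : Type*} [NormedAddCommGroup E]
    [InnerProductSpace ℝ E] [CompleteSpace E] {g : E → ℝ} {x : E} :
    gradient g x = 0 ↔ fderiv ℝ g x = 0 :=
  (toDual ℝ E).symm.map_eq_zero_iff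

section NormSubSq

variable {E F : Type*} [NormedAddCommGroup E] [NormedSpace ℝ E]
  [NormedAddCommGroup F] [InnerProductSpace ℝ F] {f : E → F} {x : E}

theorem fderiv_norm_sub_sq_apply (hf : DifferentiableAt ℝ f x) (c : F) (v : E) :
    fderiv ℝ (fun y => ‖f y - c‖ ^ 2) x v = 2 * ⟪f x - c, fderiv ℝ f x v⟫_ℝ := by
  rw [(hf.hasFDerivAt.sub_const c).norm_sq.fderiv]
  simp [inner_sub_left]

theorem fderiv_norm_sub_sq_eq_zero_iff (hf : DifferentiableAt ℝ f x)
    (hsurj : Surjective (fderiv ℝ f x)) (c : F) :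
    fderiv ℝ (fun y => ‖f y - c‖ ^ 2) x = 0 ↔ f x = c := by
  constructor
  · intro hcrit
    obtain ⟨v, hv⟩ := hsurj (f x - c)
    have hself := fderiv_norm_sub_sq_apply hf c v
    rw [hcrit, hv] at hself
    simpa [sub_eq_zero] using hself.symm
  · intro hfx
    ext v
    simp [fderiv_norm_sub_sq_apply hf, hfx]

end NormSubSq

theorem invertible_cone_invex_general (n : ℕ)
    (f : EuclideanSpace ℝ (Fin n) → EuclideanSpace ℝ (Fin n))
    (hf_bij : Function.Bijective f)
    (hf : Differentiable ℝ f)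
    (hf_deriv : ∀ x, Function.Bijective (fderiv ℝ f x))
    (c : EuclideanSpace ℝ (Fin n))
    (h : EuclideanSpace ℝ (Fin n) → ℝ)
    (hdef : ∀ x, h x = ‖f x - c‖ ^ 2) :
    (∀ x, gradient h x = 0 ↔ f x = c) ∧
    (∃! x₀, f x₀ = c) ∧
    (∀ x₀, f x₀ = c → ∀ y, y ≠ x₀ → h x₀ < h y) ∧
    (∀ x, gradient h x = 0 → ∀ y, h x ≤ h y) := by
  obtain rfl : h = fun x => ‖f x - c‖ ^ 2 := funext hdef
  have hstationary : ∀ x, gradient (fun x => ‖f x - c‖ ^ 2) x = 0 ↔ f x = c := fun x => by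
    rw [gradient_eq_zero_iff_fderiv_eq_zero]
    exact fderiv_norm_sub_sq_eq_zero_iff (hf x) (hf_deriv x).2 c
  refine ⟨hstationary, hf_bij.existsUnique c, fun x₀ hx₀ y hy => ?_, fun x hx y => ?_⟩
  · have hfy : f y - c ≠ 0 := sub_ne_zero.2 fun hfy => hy (hf_bij.1 (hfy.trans hx₀.symm))
    simp only [hx₀, sub_self, norm_zero, zero_pow two_ne_zero]
    positivity
  · simp only [(hstationary x).1 hx, sub_self, norm_zero, zero_pow two_ne_zero]
    positivity

/-- The paper's invertible-plus-cone construction: for an invertible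
(everywhere-differentiable with invertible derivative) bijection `f` and
`h x = ‖f x − c‖²`, the stationary points of `h` are exactly the points with
`f x = c`, the unique such point is the unique (strict) global minimizer of
`h`, and in particular `h` is invex. -/
theorem invertible_cone_invex (n : ℕ) (hn : 1 ≤ n)
    (f : EuclideanSpace ℝ (Fin n) → EuclideanSpace ℝ (Fin n))
    (hf_bij : Function.Bijective f)
    (hf : Differentiable ℝ f)
    (hf_deriv : ∀ x, Function.Bijective (fderiv ℝ f x))
    (c : EuclideanSpace ℝ (Fin n))
    (h : EuclideanSpace ℝ (Fin n) → ℝ)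
    (hdef : ∀ x, h x = ‖f x - c‖ ^ 2) :
    (∀ x, gradient h x = 0 ↔ f x = c) ∧
    (∃! x₀, f x₀ = c) ∧
    (∀ x₀, f x₀ = c → ∀ y, y ≠ x₀ → h x₀ < h y) ∧
    (∀ x, gradient h x = 0 → ∀ y, h x ≤ h y) :=
  invertible_cone_invex_general n f hf_bij hf hf_deriv c h hdef
end
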